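/- Let A, B be contractions from H1 to H2 such that A - B = D_{A*} X̃ D_B for some bounded operator X̃. Then ‖D_B x‖ ≤ α‖D_A x‖ for all x ∈ H1, where α = ‖X̃‖ + √(1 + ‖X̃‖²). Consequently there exists a bounded M with D_B = M D_A, ‖M‖ ≤ α, and B - A = D_{A*} X' D_A with X' = -X̃M satisfying ‖X'‖ ≤ ‖X̃‖² + ‖X̃‖√(1 + ‖X̃‖²). -/

import Mathlib

open ContinuousLinearMap Complex

noncomputable section

variable {H1 H2 : Type*}
  [NormedAddCommGroup H1] [InnerProductSpace ℂ H1] [CompleteSpace H1]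
  [NormedAddCommGroup H2] [InnerProductSpace ℂ H2] [CompleteSpace H2]

/-- Real part of an operator. -/
def reOp {H : Type*} [NormedAddCommGroup H] [InnerProductSpace ℂ H] [CompleteSpace H]
    (T : H →L[ℂ] H) : H →L[ℂ] H := (2 : ℂ)⁻¹ • (T + adjoint T)

/-- Imaginary part of an operator. -/
def imOp {H : Type*} [NormedAddCommGroup H] [InnerProductSpace ℂ H] [CompleteSpace H]
    (T : H →L[ℂ] H) : H →L[ℂ] H := (2 * Complex.I : ℂ)⁻¹ • (T - adjoint T)

/-- The defect operator `D_C = (I - C*C)^{1/2}` (positive square root). -/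
def defect {Ha Hb : Type*} [NormedAddCommGroup Ha] [InnerProductSpace ℂ Ha] [CompleteSpace Ha]
    [NormedAddCommGroup Hb] [InnerProductSpace ℂ Hb] [CompleteSpace Hb]
    (C : Ha →L[ℂ] Hb) : Ha →L[ℂ] Ha := CFC.sqrt (1 - adjoint C ∘L C)

/-!
Since `B x = A x - D_{A*} X̃ D_B x` and `‖D_C x‖² = ‖x‖² - ‖C x‖²` for every defect operator,
expanding `‖B x‖²` and bounding the cross term with `‖D_{A*} A x‖ ≤ ‖D_A x‖` gives
`‖D_B x‖² ≤ ‖D_A x‖² + 2 ‖X̃‖ ‖D_A x‖ ‖D_B x‖`; solving this quadratic inequality for `‖D_B x‖`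
gives the bound by `α = ‖X̃‖ + √(1 + ‖X̃‖²)`. Douglas' lemma then factors `D_B = M D_A` with
`‖M‖ ≤ α`: `M` sends `D_A x` to `D_B x` on the range of `D_A`, is extended to its closure, and is
composed with the orthogonal projection onto that closure.
-/

section Defect

variable {𝕜 E F : Type*} [RCLike 𝕜]
  [NormedAddCommGroup E] [InnerProductSpace 𝕜 E] [CompleteSpace E]
  [NormedAddCommGroup F] [InnerProductSpace 𝕜 F] [CompleteSpace F]

theorem norm_sq_apply_of_comp_self_eq_one_sub {C : E →L[𝕜] F} {D : E →L[𝕜] E}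
    (hD : IsSelfAdjoint D) (hsq : D ∘L D = 1 - adjoint C ∘L C) (x : E) :
    ‖D x‖ ^ 2 = ‖x‖ ^ 2 - ‖C x‖ ^ 2 := by
  rw [apply_norm_sq_eq_inner_adjoint_left, apply_norm_sq_eq_inner_adjoint_left C,
    ← @inner_self_eq_norm_sq 𝕜, hD.adjoint_eq, hsq, sub_apply, one_apply_eq_self,
    inner_sub_left, map_sub]

theorem norm_sq_apply_le_norm_mul_norm_adjoint_comp_apply (C : E →L[𝕜] F) (x : E) :
    ‖C x‖ ^ 2 ≤ ‖x‖ * ‖(adjoint C ∘L C) x‖ := by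
  rw [← @inner_self_eq_norm_sq 𝕜, ← adjoint_inner_right, ← comp_apply]
  exact re_inner_le_norm _ _

theorem norm_defect_adjoint_apply_le {C : E →L[𝕜] F} {D : E →L[𝕜] E} {D' : F →L[𝕜] F}
    (hD : IsSelfAdjoint D) (hsq : D ∘L D = 1 - adjoint C ∘L C)
    (hD' : IsSelfAdjoint D') (hsq' : D' ∘L D' = 1 - C ∘L adjoint C) (x : E) :
    ‖D' (C x)‖ ≤ ‖D x‖ := by
  have hsq'' : D' ∘L D' = 1 - adjoint (adjoint C) ∘L adjoint C := by rw [adjoint_adjoint, hsq']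
  have h' := norm_sq_apply_of_comp_self_eq_one_sub hD' hsq'' (C x)
  have h := norm_sq_apply_of_comp_self_eq_one_sub hD hsq x
  have hCS := norm_sq_apply_le_norm_mul_norm_adjoint_comp_apply C x
  rw [comp_apply] at hCS
  refine le_of_sq_le_sq ?_ (norm_nonneg _)
  -- AM-GM: `2 ‖C x‖² ≤ 2 ‖x‖ ‖C* C x‖ ≤ ‖x‖² + ‖C* C x‖²`
  nlinarith [sq_nonneg (‖x‖ - ‖adjoint C (C x)‖)]

theorem norm_defect_apply_sq_le_of_sub_eq {A B Xt : E →L[𝕜] F} {DA DB : E →L[𝕜] E}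
    {DAs : F →L[𝕜] F}
    (hDA : IsSelfAdjoint DA) (hDAsq : DA ∘L DA = 1 - adjoint A ∘L A)
    (hDAs : IsSelfAdjoint DAs) (hDAssq : DAs ∘L DAs = 1 - A ∘L adjoint A)
    (hDB : IsSelfAdjoint DB) (hDBsq : DB ∘L DB = 1 - adjoint B ∘L B)
    (hXt : A - B = DAs ∘L Xt ∘L DB) (x : E) :
    ‖DB x‖ ^ 2 ≤ ‖DA x‖ ^ 2 + 2 * ‖Xt‖ * ‖DA x‖ * ‖DB x‖ := by
  set y := DAs (Xt (DB x))
  have hBx : B x = A x - y := by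
    rw [show y = (A - B) x by rw [hXt]; rfl, sub_apply, sub_sub_cancel]
  have hcross : RCLike.re (inner 𝕜 (A x) y) ≤ ‖DA x‖ * (‖Xt‖ * ‖DB x‖) := calc
    RCLike.re (inner 𝕜 (A x) y) = RCLike.re (inner 𝕜 (DAs (A x)) (Xt (DB x))) := by
      rw [← adjoint_inner_left, hDAs.adjoint_eq]
    _ ≤ ‖DAs (A x)‖ * ‖Xt (DB x)‖ := re_inner_le_norm _ _
    _ ≤ ‖DA x‖ * (‖Xt‖ * ‖DB x‖) :=
      mul_le_mul (norm_defect_adjoint_apply_le hDA hDAsq hDAs hDAssq x) (Xt.le_opNorm _)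
        (norm_nonneg _) (norm_nonneg _)
  have hB := norm_sq_apply_of_comp_self_eq_one_sub hDB hDBsq x
  have hA := norm_sq_apply_of_comp_self_eq_one_sub hDA hDAsq x
  rw [hBx, @norm_sub_sq 𝕜] at hB
  nlinarith [sq_nonneg ‖y‖]

end Defect

theorem le_add_sqrt_mul_of_sq_le {t d k : ℝ} (hd : 0 ≤ d) (h : t ^ 2 ≤ d ^ 2 + 2 * k * d * t) :
    t ≤ (k + √(1 + k ^ 2)) * d := by
  have hs : 0 ≤ √(1 + k ^ 2) * d := by positivity
  have hsq : (t - k * d) ^ 2 ≤ (√(1 + k ^ 2) * d) ^ 2 := by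
    rw [mul_pow, Real.sq_sqrt (by positivity)]
    nlinarith
  linarith [le_of_sq_le_sq hsq hs]

section Douglas

variable {𝕜 E F G : Type*} [RCLike 𝕜]
  [NormedAddCommGroup E] [NormedSpace 𝕜 E]
  [NormedAddCommGroup F] [NormedSpace 𝕜 F] [CompleteSpace F]
  [NormedAddCommGroup G] [InnerProductSpace 𝕜 G] [CompleteSpace G]

theorem exists_eq_comp_of_norm_apply_le {T : E →L[𝕜] F} {S : E →L[𝕜] G} {α : ℝ}
    (hα : 0 ≤ α) (h : ∀ x, ‖T x‖ ≤ α * ‖S x‖) :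
    ∃ M : G →L[𝕜] F, T = M ∘L S ∧ ‖M‖ ≤ α := by
  set K := (LinearMap.range (S : E →ₗ[𝕜] G)).topologicalClosure
  let e : E →ₗ[𝕜] K := (S : E →ₗ[𝕜] G).codRestrict K
    fun x ↦ Submodule.le_topologicalClosure _ ⟨x, rfl⟩
  have he : DenseRange e := by
    rw [DenseRange, Subtype.dense_iff, ← Set.range_comp]
    exact (Submodule.topologicalClosure_coe _).subset
  let N := (T : E →ₗ[𝕜] F).extendOfNorm e
  refine ⟨N ∘L K.orthogonalProjectionOnto, ?_, ?_⟩
  · ext x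
    have hx : K.orthogonalProjectionOnto (S x) = e x :=
      K.orthogonalProjectionOnto_mem_subspace_eq_self (e x)
    simp only [comp_apply, hx, N, LinearMap.extendOfNorm_eq he ⟨α, h⟩, coe_coe]
  · calc ‖N ∘L K.orthogonalProjectionOnto‖ ≤ ‖N‖ * ‖K.orthogonalProjectionOnto‖ :=
          opNorm_comp_le _ _
      _ ≤ α * 1 := mul_le_mul (LinearMap.opNorm_extendOfNorm_le he hα h)
          K.orthogonalProjectionOnto_norm_le (norm_nonneg _) hα
      _ = α := mul_one α

end Douglas

theorem stmt16_general (A B : H1 →L[ℂ] H2)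
    (DA : H1 →L[ℂ] H1) (hDApos : 0 ≤ DA) (hDAsq : DA ∘L DA = 1 - adjoint A ∘L A)
    (DAs : H2 →L[ℂ] H2) (hDAspos : 0 ≤ DAs) (hDAssq : DAs ∘L DAs = 1 - A ∘L adjoint A)
    (DB : H1 →L[ℂ] H1) (hDBpos : 0 ≤ DB) (hDBsq : DB ∘L DB = 1 - adjoint B ∘L B)
    (Xt : H1 →L[ℂ] H2) (hXt : A - B = DAs ∘L Xt ∘L DB) :
    (∀ x : H1, ‖DB x‖ ≤ (‖Xt‖ + Real.sqrt (1 + ‖Xt‖ ^ 2)) * ‖DA x‖) ∧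
      ∃ M : H1 →L[ℂ] H1, DB = M ∘L DA ∧ ‖M‖ ≤ ‖Xt‖ + Real.sqrt (1 + ‖Xt‖ ^ 2) ∧
        B - A = DAs ∘L (-(Xt ∘L M)) ∘L DA ∧
        ‖-(Xt ∘L M)‖ ≤ ‖Xt‖ ^ 2 + ‖Xt‖ * Real.sqrt (1 + ‖Xt‖ ^ 2) := by
  have hbound (x : H1) : ‖DB x‖ ≤ (‖Xt‖ + √(1 + ‖Xt‖ ^ 2)) * ‖DA x‖ :=
    le_add_sqrt_mul_of_sq_le (norm_nonneg _) <| norm_defect_apply_sq_le_of_sub_eq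
      (.of_nonneg hDApos) hDAsq (.of_nonneg hDAspos) hDAssq (.of_nonneg hDBpos) hDBsq hXt x
  obtain ⟨M, hM, hMnorm⟩ := exists_eq_comp_of_norm_apply_le (by positivity) hbound
  refine ⟨hbound, M, hM, hMnorm, ?_, ?_⟩
  · rw [← neg_sub, hXt, hM, neg_comp, comp_neg, comp_assoc]
  · calc ‖-(Xt ∘L M)‖ ≤ ‖Xt‖ * ‖M‖ := (norm_neg _).trans_le (opNorm_comp_le _ _)
      _ ≤ ‖Xt‖ * (‖Xt‖ + √(1 + ‖Xt‖ ^ 2)) := by gcongr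
      _ = ‖Xt‖ ^ 2 + ‖Xt‖ * √(1 + ‖Xt‖ ^ 2) := by ring

theorem stmt16 (A B : H1 →L[ℂ] H2) (hA : ‖A‖ ≤ 1) (hB : ‖B‖ ≤ 1)
    (DA : H1 →L[ℂ] H1) (hDApos : 0 ≤ DA) (hDAsq : DA ∘L DA = 1 - adjoint A ∘L A)
    (DAs : H2 →L[ℂ] H2) (hDAspos : 0 ≤ DAs) (hDAssq : DAs ∘L DAs = 1 - A ∘L adjoint A)
    (DB : H1 →L[ℂ] H1) (hDBpos : 0 ≤ DB) (hDBsq : DB ∘L DB = 1 - adjoint B ∘L B)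
    (Xt : H1 →L[ℂ] H2) (hXt : A - B = DAs ∘L Xt ∘L DB) :
    (∀ x : H1, ‖DB x‖ ≤ (‖Xt‖ + Real.sqrt (1 + ‖Xt‖ ^ 2)) * ‖DA x‖) ∧
      ∃ M : H1 →L[ℂ] H1, DB = M ∘L DA ∧ ‖M‖ ≤ ‖Xt‖ + Real.sqrt (1 + ‖Xt‖ ^ 2) ∧
        B - A = DAs ∘L (-(Xt ∘L M)) ∘L DA ∧
        ‖-(Xt ∘L M)‖ ≤ ‖Xt‖ ^ 2 + ‖Xt‖ * Real.sqrt (1 + ‖Xt‖ ^ 2) :=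
  stmt16_general A B DA hDApos hDAsq DAs hDAspos hDAssq DB hDBpos hDBsq Xt hXt
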